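/- arXiv:2507.21209 — 4 statements merged into one kernel-verified Lean document; each statement's English description precedes it below -/
import Mathlib

section
/- Suppose a' : G → G → K is another function satisfying the same compatibility condition φ(g)(φ(h)(x)) = a'(g,h) · φ(g·h)(x) · a'(g,h)⁻¹ for all x ∈ K, and let z' be defined from a' in the same way z is defined from a. Then λ(g,h) := a'(g,h) · a(g,h)⁻¹ is central in K for all g, h ∈ G, and z'(g,h,k) = z(g,h,k) · λ(g,h) · λ(g·h, k) · (φ(g)(λ(h,k)))⁻¹ · λ(g, h·k)⁻¹. That is, z' and z differ by the twisted 3-coboundary of λ, so the cohomology class of the obstruction is independent of the choice of restriction. -/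
/-- Auxiliary: rearranging a product with four elements commuting with everything. -/
lemma central_rearrange {K : Type*} [Group K] (A B P Q c1 c2 c3 c4 : K)
    (h1 : ∀ x : K, x * c1 = c1 * x) (h2 : ∀ x : K, x * c2 = c2 * x)
    (h3 : ∀ x : K, x * c3 = c3 * x) (h4 : ∀ x : K, x * c4 = c4 * x) :
    (c1 * A) * (c2 * B) * ((c3 * P) * (c4 * Q))⁻¹ =
      A * B * (P * Q)⁻¹ * c1 * c2 * c3⁻¹ * c4⁻¹ := by
  have h3' : ∀ x : K, x * c3⁻¹ = c3⁻¹ * x := by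
    intro x
    have := h3 x⁻¹
    calc x * c3⁻¹ = (c3 * x⁻¹)⁻¹ := by group
    _ = (x⁻¹ * c3)⁻¹ := by rw [this]
    _ = c3⁻¹ * x := by group
  have h4' : ∀ x : K, x * c4⁻¹ = c4⁻¹ * x := by
    intro x
    have := h4 x⁻¹
    calc x * c4⁻¹ = (c4 * x⁻¹)⁻¹ := by group
    _ = (x⁻¹ * c4)⁻¹ := by rw [this]
    _ = c4⁻¹ * x := by group
  calc (c1 * A) * (c2 * B) * ((c3 * P) * (c4 * Q))⁻¹
      = c1 * (A * c2) * (B * (Q⁻¹ * (c4⁻¹ * (P⁻¹ * c3⁻¹)))) := by group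
    _ = c1 * (c2 * A) * (B * (Q⁻¹ * (c4⁻¹ * (P⁻¹ * c3⁻¹)))) := by rw [h2 A]
    _ = c1 * c2 * (A * (B * Q⁻¹)) * ((c4⁻¹ * P⁻¹) * c3⁻¹) := by group
    _ = c1 * c2 * (A * (B * Q⁻¹)) * ((P⁻¹ * c4⁻¹) * c3⁻¹) := by rw [← h4' P⁻¹]
    _ = c1 * c2 * (A * (B * Q⁻¹)) * (P⁻¹ * (c4⁻¹ * c3⁻¹)) := by group
    _ = c1 * c2 * (A * (B * Q⁻¹)) * (P⁻¹ * (c3⁻¹ * c4⁻¹)) := by rw [h3' c4⁻¹]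
    _ = c1 * (c2 * (A * (B * (Q⁻¹ * P⁻¹)))) * (c3⁻¹ * c4⁻¹) := by group
    _ = c1 * ((A * (B * (Q⁻¹ * P⁻¹))) * c2) * (c3⁻¹ * c4⁻¹) := by
        rw [← h2 (A * (B * (Q⁻¹ * P⁻¹)))]
    _ = (c1 * (A * (B * (Q⁻¹ * P⁻¹)))) * (c2 * (c3⁻¹ * c4⁻¹)) := by group
    _ = ((A * (B * (Q⁻¹ * P⁻¹))) * c1) * (c2 * (c3⁻¹ * c4⁻¹)) := by
        rw [← h1 (A * (B * (Q⁻¹ * P⁻¹)))]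
    _ = A * B * (P * Q)⁻¹ * c1 * c2 * c3⁻¹ * c4⁻¹ := by group

/-- two choices of restriction `a` and `a'` yield obstruction cochains
`z` and `z'` differing by the twisted 3-coboundary of `λ(g,h) = a'(g,h)·a(g,h)⁻¹`,
which is central in `K`; so the cohomology class of the obstruction is independent
of the choice of restriction. -/
theorem obstruction_class_independent_of_restriction
    {G K : Type*} [Group G] [Group K]
    (φ : G → MulAut K) (a a' : G → G → K)
    (ha : ∀ (g h : G) (x : K), φ g (φ h x) = a g h * φ (g * h) x * (a g h)⁻¹)
    (ha' : ∀ (g h : G) (x : K), φ g (φ h x) = a' g h * φ (g * h) x * (a' g h)⁻¹)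
    (z z' : G → G → G → K)
    (hz : ∀ g h k : G,
      z g h k = a g h * a (g * h) k * (φ g (a h k) * a g (h * k))⁻¹)
    (hz' : ∀ g h k : G,
      z' g h k = a' g h * a' (g * h) k * (φ g (a' h k) * a' g (h * k))⁻¹)
    (lam : G → G → K) (hlam : ∀ g h : G, lam g h = a' g h * (a g h)⁻¹) :
    (∀ g h : G, lam g h ∈ Subgroup.center K) ∧
    (∀ g h k : G, z' g h k =
      z g h k * lam g h * lam (g * h) k * (φ g (lam h k))⁻¹ * (lam g (h * k))⁻¹) := by
  -- key conjugation equality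
  have key : ∀ (g h : G) (y : K),
      a g h * y * (a g h)⁻¹ = a' g h * y * (a' g h)⁻¹ := by
    intro g h y
    have h1 := ha g h ((φ (g * h)).symm y)
    have h2 := ha' g h ((φ (g * h)).symm y)
    rw [MulEquiv.apply_symm_apply] at h1 h2
    rw [← h1, ← h2]
  have hcomm : ∀ (g h : G) (x : K), x * lam g h = lam g h * x := by
    intro g h x
    have h1 := key g h ((a g h)⁻¹ * x * a g h)
    rw [hlam]
    have h2 : x = a' g h * ((a g h)⁻¹ * x * a g h) * (a' g h)⁻¹ := by
      rw [← h1]; group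
    calc x * (a' g h * (a g h)⁻¹)
        = (a' g h * ((a g h)⁻¹ * x * a g h) * (a' g h)⁻¹) * (a' g h * (a g h)⁻¹) := by
          rw [← h2]
      _ = a' g h * (a g h)⁻¹ * x := by group
  have hcent : ∀ g h : G, lam g h ∈ Subgroup.center K := by
    intro g h
    exact Subgroup.mem_center_iff.mpr (hcomm g h)
  refine ⟨hcent, ?_⟩
  intro g h k
  have ha'eq : ∀ g h : G, a' g h = lam g h * a g h := by
    intro g h; rw [hlam]; group
  have hφcomm : ∀ (x : K), x * φ g (lam h k) = φ g (lam h k) * x := by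
    intro x
    have := hcomm h k ((φ g).symm x)
    have h2 := congrArg (φ g) this
    rw [map_mul, map_mul, MulEquiv.apply_symm_apply] at h2
    exact h2
  rw [hz', hz, ha'eq, ha'eq, ha'eq, ha'eq, map_mul]
  exact central_rearrange (a g h) (a (g * h) k) (φ g (a h k)) (a g (h * k))
    (lam g h) (lam (g * h) k) (φ g (lam h k)) (lam g (h * k))
    (hcomm g h) (hcomm (g * h) k) hφcomm (hcomm g (h * k))
end

section
/- The averaged operator H̃ defined by H̃ x := ∫_G u(g)(H(u(g)⁻¹ x)) dμ(g) satisfies H̃ ψ = 0, and Re⟨φ, H̃ φ⟩ ≥ J·‖φ‖² for every φ ∈ V orthogonal to ψ. (This is the compact-group version of the symmetrization argument of Appendix B, with the group average taken with respect to the Haar measure.) -/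
/-!
Conjugating `H` by an isometry that fixes `ψ` preserves both `H ψ = 0` and the gap inequality,
since such an isometry maps `ψ^⊥` onto itself. For fixed `φ ⊥ ψ` the gap inequality is a linear
condition on the operator, so it survives averaging over a probability measure; the only analytic
input is that the conjugated family is strongly continuous, hence integrable over compact `G`.
-/

open MeasureTheory

namespace LinearIsometryEquiv

variable {X R E F : Type*} [TopologicalSpace X] [Semiring R]
  [SeminormedAddCommGroup E] [Module R E] [SeminormedAddCommGroup F] [Module R F]
  {u : X → E ≃ₗᵢ[R] F}

theorem continuous_apply_apply_of_continuous_apply (hu : ∀ x, Continuous fun g => u g x)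
    {v : X → E} (hv : Continuous v) : Continuous fun g => u g (v g) := by
  refine continuous_iff_continuousAt.2 fun g₀ => tendsto_iff_dist_tendsto_zero.2 ?_
  have hsplit : ∀ g, dist (u g (v g)) (u g₀ (v g₀)) ≤
      dist (v g) (v g₀) + dist (u g (v g₀)) (u g₀ (v g₀)) := fun g => by
    simpa only [dist_map] using dist_triangle (u g (v g)) (u g (v g₀)) (u g₀ (v g₀))
  refine squeeze_zero (fun _ => dist_nonneg) hsplit ?_
  simpa using ((tendsto_iff_dist_tendsto_zero.1 (hv.tendsto g₀)).add
    (tendsto_iff_dist_tendsto_zero.1 ((hu (v g₀)).tendsto g₀)))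

theorem continuous_symm_apply_of_continuous_apply (hu : ∀ x, Continuous fun g => u g x)
    (y : F) : Continuous fun g => (u g).symm y := by
  refine continuous_iff_continuousAt.2 fun g₀ => tendsto_iff_dist_tendsto_zero.2 ?_
  have hdist : ∀ g, dist ((u g).symm y) ((u g₀).symm y) =
      dist (u g₀ ((u g₀).symm y)) (u g ((u g₀).symm y)) := fun g => by
    rw [← (u g).dist_map, apply_symm_apply, apply_symm_apply]
  simp only [hdist]
  simpa [dist_comm] using tendsto_iff_dist_tendsto_zero.1 ((hu ((u g₀).symm y)).tendsto g₀)

end LinearIsometryEquiv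

section Gap

variable {𝕜 V : Type*} [RCLike 𝕜] [NormedAddCommGroup V] [InnerProductSpace 𝕜 V]

variable (𝕜) in
def HasGapAbove (H : V → V) (ψ : V) (J : ℝ) : Prop :=
  ∀ φ : V, inner 𝕜 φ ψ = 0 → J * ‖φ‖ ^ 2 ≤ RCLike.re (inner 𝕜 φ (H φ))

theorem HasGapAbove.conj {H : V → V} {ψ : V} {J : ℝ} (hH : HasGapAbove 𝕜 H ψ J)
    {e : V ≃ₗᵢ[𝕜] V} (he : e ψ = ψ) :
    HasGapAbove 𝕜 (fun x => e (H (e.symm x))) ψ J := by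
  intro φ hφ
  have horth : inner 𝕜 (e.symm φ) ψ = 0 := by
    rw [← e.inner_map_map, e.apply_symm_apply, he, hφ]
  simpa only [← e.inner_map_map (e.symm φ), e.apply_symm_apply, e.symm.norm_map]
    using hH (e.symm φ) horth

theorem HasGapAbove.integral [NormedSpace ℝ V] [CompleteSpace V] {α : Type*} [MeasurableSpace α]
    (μ : Measure α) [IsProbabilityMeasure μ] {F : α → V → V} {ψ : V} {J : ℝ}
    (hF : ∀ a, HasGapAbove 𝕜 (F a) ψ J) (hint : ∀ φ, Integrable (fun a => F a φ) μ) :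
    HasGapAbove 𝕜 (fun x => ∫ a, F a x ∂μ) ψ J := by
  intro φ hφ
  have hinner : Integrable (fun a => inner 𝕜 φ (F a φ)) μ := (hint φ).const_inner φ
  rw [← integral_inner (hint φ), ← integral_re hinner]
  calc J * ‖φ‖ ^ 2 = ∫ _, J * ‖φ‖ ^ 2 ∂μ := by simp
    _ ≤ ∫ a, RCLike.re (inner 𝕜 φ (F a φ)) ∂μ :=
      integral_mono (integrable_const _) hinner.re fun a => hF a φ hφ

end Gap

theorem symmetrized_hamiltonian_gapped_compact_group_general
    {V : Type*} [NormedAddCommGroup V] [InnerProductSpace ℂ V]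
    [FiniteDimensional ℂ V]
    (ψ : V) (J : ℝ)
    (H : V →ₗ[ℂ] V) (hHψ : H ψ = 0)
    (hgap : ∀ φ : V, (inner ℂ φ ψ : ℂ) = 0 → J * ‖φ‖ ^ 2 ≤ (inner ℂ φ (H φ) : ℂ).re)
    {G : Type*} [TopologicalSpace G] [CompactSpace G]
    [MeasurableSpace G] [BorelSpace G]
    (μ : Measure G) [IsProbabilityMeasure μ]
    (u : G → (V ≃ₗᵢ[ℂ] V)) (hu : ∀ g : G, u g ψ = ψ)
    (hcont : ∀ x : V, Continuous fun g : G => u g x)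
    (Ht : V → V)
    (hHt : ∀ x : V, Ht x = ∫ g : G, u g (H ((u g).symm x)) ∂μ) :
    Ht ψ = 0 ∧
      ∀ φ : V, (inner ℂ φ ψ : ℂ) = 0 → J * ‖φ‖ ^ 2 ≤ (inner ℂ φ (Ht φ) : ℂ).re := by
  obtain rfl : Ht = fun x => ∫ g, u g (H ((u g).symm x)) ∂μ := funext hHt
  have hsymm : ∀ g, (u g).symm ψ = ψ := fun g => (u g).symm_apply_eq.2 (hu g).symm
  have hint : ∀ φ, Integrable (fun g => u g (H ((u g).symm φ))) μ := fun φ =>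
    (LinearIsometryEquiv.continuous_apply_apply_of_continuous_apply hcont
      (H.continuous_of_finiteDimensional.comp
        (LinearIsometryEquiv.continuous_symm_apply_of_continuous_apply hcont φ))
      ).integrable_of_hasCompactSupport (HasCompactSupport.of_compactSpace _)
  exact ⟨by simp [hsymm, hHψ], HasGapAbove.integral μ (fun g => HasGapAbove.conj hgap (hu g)) hint⟩

/-- the Haar-averaged Hamiltonian
`H̃ x = ∫_G u(g)(H(u(g)⁻¹ x)) dμ(g)` over a compact group `G` of linear isometric
equivalences fixing the gapped ground state `ψ` again annihilates `ψ` and has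
spectral gap at least `J` above it (compact-group version of Appendix B). -/
theorem symmetrized_hamiltonian_gapped_compact_group
    {V : Type*} [NormedAddCommGroup V] [InnerProductSpace ℂ V]
    [FiniteDimensional ℂ V]
    (ψ : V) (hψ : ‖ψ‖ = 1) (J : ℝ) (hJ : 0 ≤ J)
    (H : V →ₗ[ℂ] V) (hHψ : H ψ = 0)
    (hgap : ∀ φ : V, (inner ℂ φ ψ : ℂ) = 0 → J * ‖φ‖ ^ 2 ≤ (inner ℂ φ (H φ) : ℂ).re)
    {G : Type*} [Group G] [TopologicalSpace G] [IsTopologicalGroup G] [CompactSpace G]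
    [MeasurableSpace G] [BorelSpace G]
    (μ : Measure G) [μ.IsHaarMeasure] [IsProbabilityMeasure μ]
    (u : G → (V ≃ₗᵢ[ℂ] V)) (hu : ∀ g : G, u g ψ = ψ)
    (hcont : ∀ x : V, Continuous fun g : G => u g x)
    (Ht : V → V)
    (hHt : ∀ x : V, Ht x = ∫ g : G, u g (H ((u g).symm x)) ∂μ) :
    Ht ψ = 0 ∧
      ∀ φ : V, (inner ℂ φ ψ : ℂ) = 0 → J * ‖φ‖ ^ 2 ≤ (inner ℂ φ (Ht φ) : ℂ).re :=
  symmetrized_hamiltonian_gapped_compact_group_general ψ J H hHψ hgap μ u hu hcont Ht hHt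
end

section
/- There exists a function β : G → U(1) such that the cohomologous cocycle ω'(g,h) := ω(g,h)·β(g·h)·β(g)⁻¹·β(h)⁻¹ takes values in the n-th roots of unity, i.e., ω'(g,h)ⁿ = 1 for all g, h ∈ G. (Consequently, every H²(G, U(1)) class realized by a finite-dimensional projective unitary representation lies in the image of H²(G, ℚ/ℤ) → H²(G, U(1)), as asserted in Section 9.4.3.) -/
/-!
Taking determinants in `ρ g * ρ h = ω g h • ρ (g * h)` gives
`ω(g,h)ⁿ = det ρ(g) · det ρ(h) / det ρ(g h)`, so the `n`-th power of `ω` is the coboundary of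
`g ↦ det ρ(g)`. Choosing `β(g)` an `n`-th root of `det ρ(g)`, which lies on the unit circle,
the cohomologous cocycle `ω · δβ` therefore has trivial `n`-th power.
-/

open Matrix

theorem Matrix.norm_det_of_mem_unitaryGroup {ι : Type*} [Fintype ι] [DecidableEq ι]
    {U : Matrix ι ι ℂ} (hU : U ∈ unitaryGroup ι ℂ) : ‖U.det‖ = 1 :=
  CStarRing.norm_of_mem_unitary (det_of_mem_unitary hU)

theorem Matrix.exists_norm_eq_one_pow_card_eq_det {ι : Type*} [Fintype ι] [DecidableEq ι]
    {U : Matrix ι ι ℂ} (hU : U ∈ unitaryGroup ι ℂ) :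
    ∃ z : ℂ, ‖z‖ = 1 ∧ z ^ Fintype.card ι = U.det := by
  rcases isEmpty_or_nonempty ι with hι | hι
  · exact ⟨1, norm_one, by simp⟩
  have hcard : Fintype.card ι ≠ 0 := Fintype.card_ne_zero
  obtain ⟨z, hz⟩ := IsAlgClosed.exists_pow_nat_eq U.det (Nat.pos_of_ne_zero hcard)
  refine ⟨z, ?_, hz⟩
  have : ‖z‖ ^ Fintype.card ι = 1 ^ Fintype.card ι := by
    rw [← norm_pow, hz, norm_det_of_mem_unitaryGroup hU, one_pow]
  exact (pow_left_inj₀ (norm_nonneg z) zero_le_one hcard).mp this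

theorem Matrix.det_mul_det_eq_pow_card_mul_det {ι R : Type*} [Fintype ι] [DecidableEq ι]
    [CommRing R] {A B C : Matrix ι ι R} {c : R} (h : A * B = c • C) :
    A.det * B.det = c ^ Fintype.card ι * C.det := by
  rw [← det_mul, h, det_smul]

theorem pow_mul_coboundary_eq_one {G K : Type*} [Mul G] [Field K] {n : ℕ}
    {ω : G → G → K} {d β : G → K} (hd : ∀ g, d g ≠ 0) (hβ : ∀ g, β g ^ n = d g)
    (hω : ∀ g h, d g * d h = ω g h ^ n * d (g * h)) (g h : G) :
    (ω g h * β (g * h) * (β g)⁻¹ * (β h)⁻¹) ^ n = 1 := by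
  simp only [mul_pow, inv_pow, hβ, ← hω]
  field_simp [hd g, hd h]

theorem projective_cocycle_cohomologous_to_roots_of_unity_general
    {G : Type*} [Group G] (n : ℕ)
    (ρ : G → Matrix.unitaryGroup (Fin n) ℂ)
    (ω : G → G → ℂ)
    (hρ : ∀ g h : G,
      (ρ g : Matrix (Fin n) (Fin n) ℂ) * (ρ h : Matrix (Fin n) (Fin n) ℂ)
        = ω g h • (ρ (g * h) : Matrix (Fin n) (Fin n) ℂ)) :
    ∃ β : G → ℂ, (∀ g : G, ‖β g‖ = 1) ∧
      ∀ g h : G, (ω g h * β (g * h) * (β g)⁻¹ * (β h)⁻¹) ^ n = 1 := by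
  choose β hβ_norm hβ_pow using fun g => exists_norm_eq_one_pow_card_eq_det (ρ g).2
  rw [Fintype.card_fin] at hβ_pow
  have hdet_ne_zero (g : G) : (ρ g : Matrix (Fin n) (Fin n) ℂ).det ≠ 0 :=
    norm_ne_zero_iff.mp (by rw [norm_det_of_mem_unitaryGroup (ρ g).2]; exact one_ne_zero)
  have hω_pow (g h : G) := Fintype.card_fin n ▸ det_mul_det_eq_pow_card_mul_det (hρ g h)
  exact ⟨β, hβ_norm, pow_mul_coboundary_eq_one hdet_ne_zero hβ_pow hω_pow⟩

/-- the 2-cocycle `ω` of a finite-dimensional projective unitary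
representation can be modified by a coboundary `β` so that it takes values in the
`n`-th roots of unity; hence every `H²(G, U(1))` class realized in dimension `n`
lies in the image of `H²(G, ℚ/ℤ) → H²(G, U(1))` (Section 9.4.3). -/
theorem projective_cocycle_cohomologous_to_roots_of_unity
    {G : Type*} [Group G] (n : ℕ) (hn : 1 ≤ n)
    (ρ : G → Matrix.unitaryGroup (Fin n) ℂ)
    (ω : G → G → ℂ) (hω : ∀ g h : G, ‖ω g h‖ = 1)
    (hρ : ∀ g h : G,
      (ρ g : Matrix (Fin n) (Fin n) ℂ) * (ρ h : Matrix (Fin n) (Fin n) ℂ)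
        = ω g h • (ρ (g * h) : Matrix (Fin n) (Fin n) ℂ)) :
    ∃ β : G → ℂ, (∀ g : G, ‖β g‖ = 1) ∧
      ∀ g h : G, (ω g h * β (g * h) * (β g)⁻¹ * (β h)⁻¹) ^ n = 1 :=
  projective_cocycle_cohomologous_to_roots_of_unity_general n ρ ω hρ
end

section
/- Suppose r satisfies: for all a, b with r a b there exists c such that r a c, r c a, r c b, and r b c. Then EqvGen r equals EqvGen s, where s a b := (r a b ∧ r b a). In other words, the equivalence relation generated by the one-way relation r coincides with the equivalence relation generated by the two-way relation s. -/
/-- Appendix A: if whenever `r a b` holds there is a `c` blending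
both ways with `a` and with `b`, then the equivalence relation generated by the
one-way relation `r` coincides with the equivalence relation generated by the
two-way relation `s a b := r a b ∧ r b a`. -/
theorem eqvgen_eq_eqvGen_symmetrized
    {α : Type*} (r : α → α → Prop)
    (h : ∀ a b : α, r a b → ∃ c : α, r a c ∧ r c a ∧ r c b ∧ r b c) :
    Relation.EqvGen r = Relation.EqvGen (fun a b => r a b ∧ r b a) := by
  ext a b
  constructor
  · intro hab
    induction hab with
    | rel a b hab =>
      obtain ⟨c, h1, h2, h3, h4⟩ := h a b hab
      exact (Relation.EqvGen.rel a c ⟨h1, h2⟩).trans _ _ _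
        (Relation.EqvGen.rel c b ⟨h3, h4⟩)
    | refl a => exact Relation.EqvGen.refl a
    | symm a b _ ih => exact ih.symm _ _
    | trans a b c _ _ ih1 ih2 => exact ih1.trans _ _ _ ih2
  · intro hab
    induction hab with
    | rel a b hab => exact Relation.EqvGen.rel a b hab.1
    | refl a => exact Relation.EqvGen.refl a
    | symm a b _ ih => exact ih.symm _ _
    | trans a b c _ _ ih1 ih2 => exact ih1.trans _ _ _ ih2
end
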